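/- Let K be a simplicial complex, ξ = e^{2πi/N}, and define d_n : C_n(K;ℂ) → C_{n-1}(K;ℂ) by d_n⟨v₀,...,v_n⟩ = Σ_{i=0}^{n} ξ^i ⟨v₀,...,v̂_i,...,v_n⟩. Then the N-fold composition d^N is the zero map. -/

import Mathlib

/-- The Mayer differential on simplicial chains: on a simplex `σ` (a finite set of vertices,
listed in increasing order `v₀ < ⋯ < v_n`), `d σ = ∑_{i=0}^{n} ξ^i ⟨v₀,…,v̂_i,…,v_n⟩`,
and `d = 0` on vertices (`d_0 = 0`). -/
noncomputable def mayerD {ι : Type*} [LinearOrder ι] (ξ : ℂ) :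
    (Finset ι →₀ ℂ) →ₗ[ℂ] (Finset ι →₀ ℂ) :=
  Finsupp.lsum ℂ fun σ =>
    LinearMap.toSpanSingleton ℂ _
      (if σ.card ≤ 1 then 0 else
        ∑ i : Fin (σ.sort (· ≤ ·)).length,
          ξ ^ (i : ℕ) • Finsupp.single (σ.erase ((σ.sort (· ≤ ·)).get i)) (1 : ℂ))

/-!
Deleting `k` vertices from `⟨σ⟩` one at a time, in every possible order, the face `σ ∖ T` collects
the weight `ξ^(∑_{a ∈ T} rank_σ a)` times the `q`-factorial `[k]_{ξ⁻¹}!` (as long as `k < #σ`,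
since `d` kills vertices). For `k = N` this factorial contains
`[N]_{ξ⁻¹} = 1 + ξ⁻¹ + ⋯ + ξ^(-(N-1)) = 0`, while simplices with at most `N` vertices are already
killed by `d^N` because `d_0 = 0`.
-/

open Finset

namespace Finset

variable {α : Type*} [LinearOrder α]

/-- For `a ∈ s`, the index of `a` in the increasing enumeration of `s`. -/
def rankIn (s : Finset α) (a : α) : ℕ := #{b ∈ s | b < a}

theorem rankIn_orderEmbOfFin (s : Finset α) {k : ℕ} (h : #s = k) (i : Fin k) :
    s.rankIn (s.orderEmbOfFin h i) = i := by
  set e := s.orderEmbOfFin h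
  have hs : univ.map e.toEmbedding = s := map_orderEmbOfFin_univ s h
  rw [rankIn, ← hs, filter_map, card_map]
  simp only [Function.comp_def, RelEmbedding.coe_toEmbedding, OrderEmbedding.lt_iff_lt,
    filter_gt_eq_Iio, Fin.card_Iio]

theorem sum_rankIn_eq_sum_fin {M : Type*} [AddCommMonoid M] (s : Finset α) {k : ℕ}
    (h : #s = k) (f : α → ℕ → M) :
    ∑ a ∈ s, f a (s.rankIn a) = ∑ i : Fin k, f (s.orderEmbOfFin h i) i := by
  nth_rw 1 [← map_orderEmbOfFin_univ s h]
  rw [sum_map]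
  simp only [RelEmbedding.coe_toEmbedding, rankIn_orderEmbOfFin]

theorem sum_rankIn {M : Type*} [AddCommMonoid M] (s : Finset α) (g : ℕ → M) :
    ∑ a ∈ s, g (s.rankIn a) = ∑ j ∈ range #s, g j := by
  rw [sum_rankIn_eq_sum_fin s rfl fun _ => g, Fin.sum_univ_eq_sum_range]

theorem rankIn_sdiff_add_rankIn {s t : Finset α} (hts : t ⊆ s) (a : α) :
    (s \ t).rankIn a + t.rankIn a = s.rankIn a := by
  rw [rankIn, rankIn, rankIn, ← card_union_of_disjoint (disjoint_filter_filter sdiff_disjoint),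
    ← filter_union, sdiff_union_of_subset hts]

@[simp]
theorem rankIn_insert_self (t : Finset α) (a : α) : (insert a t).rankIn a = t.rankIn a := by
  rw [rankIn, rankIn, filter_insert, if_neg (lt_irrefl a)]

end Finset

theorem Finset.sum_powersetCard_sum_sdiff {α M : Type*} [DecidableEq α] [AddCommMonoid M]
    (s : Finset α) (k : ℕ) (F : Finset α → α → M) :
    ∑ t ∈ s.powersetCard k, ∑ a ∈ s \ t, F (insert a t) a
      = ∑ t ∈ s.powersetCard (k + 1), ∑ a ∈ t, F t a := by
  rw [sum_sigma', sum_sigma']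
  refine sum_nbij' (fun p => ⟨insert p.2 p.1, p.2⟩) (fun p => ⟨p.1.erase p.2, p.2⟩)
    ?_ ?_ ?_ ?_ fun _ _ => rfl
  · rintro ⟨t, a⟩ hp
    simp only [mem_sigma, mem_powersetCard, mem_sdiff] at hp ⊢
    obtain ⟨⟨hts, rfl⟩, has, hat⟩ := hp
    exact ⟨⟨insert_subset has hts, card_insert_of_notMem hat⟩, mem_insert_self a t⟩
  · rintro ⟨t, a⟩ hp
    simp only [mem_sigma, mem_powersetCard, mem_sdiff] at hp ⊢
    obtain ⟨⟨hts, hcard⟩, hat⟩ := hp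
    exact ⟨⟨(erase_subset a t).trans hts, by rw [card_erase_of_mem hat, hcard]; rfl⟩,
      hts hat, notMem_erase a t⟩
  · rintro ⟨t, a⟩ hp
    simp only [mem_sigma, mem_sdiff] at hp
    simp only [erase_insert hp.2.2]
  · rintro ⟨t, a⟩ hp
    simp only [mem_sigma] at hp
    simp only [insert_erase hp.2]

def qFactorial {R : Type*} [CommSemiring R] (q : R) (k : ℕ) : R :=
  ∏ m ∈ range k, ∑ j ∈ range (m + 1), q ^ j

theorem qFactorial_succ {R : Type*} [CommSemiring R] (q : R) (k : ℕ) :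
    qFactorial q (k + 1) = qFactorial q k * ∑ j ∈ range (k + 1), q ^ j :=
  prod_range_succ _ k

theorem IsPrimitiveRoot.qFactorial_eq_zero {R : Type*} [CommRing R] [IsDomain R] {q : R}
    {N : ℕ} (hq : IsPrimitiveRoot q N) (hN : 1 < N) : qFactorial q N = 0 := by
  obtain ⟨k, rfl⟩ : ∃ k, N = k + 1 := ⟨N - 1, by omega⟩
  rw [qFactorial_succ, hq.geom_sum_eq_zero hN, mul_zero]

section Mayer

variable {ι : Type*} [LinearOrder ι] (ξ : ℂ)

theorem mayerD_single_one_of_card_le_one {σ : Finset ι} (h : #σ ≤ 1) :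
    mayerD ξ (Finsupp.single σ 1) = 0 := by
  rw [mayerD, Finsupp.lsum_single, LinearMap.toSpanSingleton_apply, one_smul, if_pos h]

theorem mayerD_single_one {σ : Finset ι} (h : 2 ≤ #σ) :
    mayerD ξ (Finsupp.single σ 1) =
      ∑ a ∈ σ, ξ ^ σ.rankIn a • Finsupp.single (σ.erase a) 1 := by
  rw [mayerD, Finsupp.lsum_single, LinearMap.toSpanSingleton_apply, one_smul, if_neg (by omega),
    sum_rankIn_eq_sum_fin σ (σ.length_sort (· ≤ ·)).symm
      fun a j => ξ ^ j • Finsupp.single (σ.erase a) (1 : ℂ)]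
  rfl

/-- The face `⟨σ ∖ T⟩` with the weight it carries in `d^#T ⟨σ⟩`, up to the factor
`[#T]_{ξ⁻¹}!`. -/
noncomputable def mayerFace (σ T : Finset ι) : Finset ι →₀ ℂ :=
  ξ ^ (∑ a ∈ T, σ.rankIn a) • Finsupp.single (σ \ T) 1

theorem mayerD_mayerFace (hξ : ξ ≠ 0) {σ T : Finset ι} (hTσ : T ⊆ σ) (hcard : 2 ≤ #(σ \ T)) :
    mayerD ξ (mayerFace ξ σ T) =
      ∑ a ∈ σ \ T, ξ⁻¹ ^ (insert a T).rankIn a • mayerFace ξ σ (insert a T) := by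
  rw [mayerFace, map_smul, mayerD_single_one ξ hcard, smul_sum]
  refine sum_congr rfl fun a ha => ?_
  rw [mayerFace, smul_smul, smul_smul, ← sdiff_insert, sum_insert (mem_sdiff.mp ha).2,
    rankIn_insert_self, inv_pow, ← rankIn_sdiff_add_rankIn hTσ a]
  congr 1
  field_simp
  ring

theorem mayerD_pow_single_one (hξ : ξ ≠ 0) {σ : Finset ι} {k : ℕ} (hk : k < #σ) :
    (mayerD ξ ^ k) (Finsupp.single σ 1) =
      qFactorial ξ⁻¹ k • ∑ T ∈ σ.powersetCard k, mayerFace ξ σ T := by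
  induction k with
  | zero => simp [qFactorial, mayerFace]
  | succ k ih =>
    have hdelete : ∀ T ∈ σ.powersetCard k, mayerD ξ (mayerFace ξ σ T) =
        ∑ a ∈ σ \ T, ξ⁻¹ ^ (insert a T).rankIn a • mayerFace ξ σ (insert a T) := fun T hT => by
      obtain ⟨hTσ, hTk⟩ := mem_powersetCard.mp hT
      exact mayerD_mayerFace ξ hξ hTσ (by rw [card_sdiff_of_subset hTσ]; omega)
    have hgather : ∀ T ∈ σ.powersetCard (k + 1),
        ∑ a ∈ T, ξ⁻¹ ^ T.rankIn a • mayerFace ξ σ T =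
          (∑ j ∈ range (k + 1), ξ⁻¹ ^ j) • mayerFace ξ σ T := fun T hT => by
      rw [← sum_smul, sum_rankIn, (mem_powersetCard.mp hT).2]
    rw [pow_succ', Module.End.mul_apply, ih (by omega), map_smul, map_sum, sum_congr rfl hdelete,
      sum_powersetCard_sum_sdiff σ k fun T a => ξ⁻¹ ^ T.rankIn a • mayerFace ξ σ T,
      sum_congr rfl hgather, ← smul_sum, smul_smul, qFactorial_succ, mul_comm]

theorem mayerD_pow_card_single_one (hξ : ξ ≠ 0) {σ : Finset ι} (hσ : σ.Nonempty) :
    (mayerD ξ ^ #σ) (Finsupp.single σ 1) = 0 := by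
  obtain ⟨k, hk⟩ : ∃ k, #σ = k + 1 := ⟨#σ - 1, by have := hσ.card_pos; omega⟩
  rw [hk, pow_succ', Module.End.mul_apply, mayerD_pow_single_one ξ hξ (by omega), map_smul,
    map_sum, sum_eq_zero, smul_zero]
  intro T hT
  obtain ⟨hTσ, hTk⟩ := mem_powersetCard.mp hT
  rw [mayerFace, map_smul,
    mayerD_single_one_of_card_le_one ξ (by rw [card_sdiff_of_subset hTσ]; omega), smul_zero]

theorem mayerD_pow_eq_zero {N : ℕ} (hξ : IsPrimitiveRoot ξ N) (hN : 1 < N) :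
    mayerD (ι := ι) ξ ^ N = 0 := by
  have hξ0 : ξ ≠ 0 := hξ.ne_zero (by omega)
  refine Finsupp.lhom_ext' fun σ => LinearMap.ext_ring ?_
  rw [LinearMap.comp_apply, Finsupp.lsingle_apply, LinearMap.zero_comp, LinearMap.zero_apply]
  rcases lt_or_ge N #σ with hσN | hNσ
  · rw [mayerD_pow_single_one ξ hξ0 hσN, hξ.inv.qFactorial_eq_zero hN, zero_smul]
  rcases σ.eq_empty_or_nonempty with rfl | hσ
  · obtain ⟨k, rfl⟩ : ∃ k, N = k + 1 := ⟨N - 1, by omega⟩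
    rw [pow_succ, Module.End.mul_apply, mayerD_single_one_of_card_le_one ξ (by simp), map_zero]
  · rw [← Nat.sub_add_cancel hNσ, pow_add, Module.End.mul_apply,
      mayerD_pow_card_single_one ξ hξ0 hσ, map_zero]

end Mayer

theorem mayerD_pow_N_eq_zero_general (N : ℕ) (hN : 2 ≤ N) (ξ : ℂ)
    (hξ : ξ = Complex.exp (2 * Real.pi * Complex.I / N))
    (x : Finset ℕ →₀ ℂ) :
    ((mayerD ξ) ^ N) x = 0 := by
  have hprim : IsPrimitiveRoot ξ N := hξ ▸ Complex.isPrimitiveRoot_exp N (by omega)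
  rw [mayerD_pow_eq_zero ξ hprim hN, LinearMap.zero_apply]

/-- For a simplicial complex `K` and `ξ = e^{2πi/N}`, the Mayer differential
satisfies `d^N = 0` on the chains of `K`. -/
theorem mayerD_pow_N_eq_zero (N : ℕ) (hN : 2 ≤ N) (ξ : ℂ)
    (hξ : ξ = Complex.exp (2 * Real.pi * Complex.I / N))
    (K : Set (Finset ℕ)) (hK : ∀ s ∈ K, ∀ t ⊆ s, t ∈ K)
    (x : Finset ℕ →₀ ℂ)
    (hx : x ∈ Submodule.span ℂ ((fun σ => Finsupp.single σ (1 : ℂ)) '' K)) :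
    ((mayerD ξ) ^ N) x = 0 :=
  mayerD_pow_N_eq_zero_general N hN ξ hξ x
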